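/- Let Q be a lower transition rate operator on a finite nonempty set 𝒳 with operator norm ‖Q‖ := sup{‖Q f‖ : f ∈ 𝓛(𝒳), ‖f‖ = 1}. Then for every Δ ≥ 0 with Δ‖Q‖ ≤ 1, the map I + ΔQ (sending f to f + Δ Q f) is a lower transition operator; that is, for all f, g ∈ 𝓛(𝒳) and λ ≥ 0: (I + ΔQ)f ≥ min f pointwise, (I + ΔQ)(f+g) ≥ (I + ΔQ)f + (I + ΔQ)g pointwise, and (I + ΔQ)(λf) = λ (I + ΔQ)f. -/

import Mathlib

open Filter Topology

/-- The minimum of a real-valued function on a finite nonempty type. -/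
noncomputable def minf {X : Type*} [Fintype X] [Nonempty X] (f : X → ℝ) : ℝ :=
  Finset.univ.inf' Finset.univ_nonempty f

/-- The maximum of a real-valued function on a finite nonempty type. -/
noncomputable def maxf {X : Type*} [Fintype X] [Nonempty X] (f : X → ℝ) : ℝ :=
  Finset.univ.sup' Finset.univ_nonempty f

/-- The (real-valued) indicator function of a set. -/
noncomputable def ind {X : Type*} (A : Set X) : X → ℝ := A.indicator 1

/-- The conjugate (upper) operator `f ↦ -(Q (-f))`. -/
def conjOp {X : Type*} (Q : (X → ℝ) → (X → ℝ)) : (X → ℝ) → (X → ℝ) :=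
  fun f => -(Q (-f))

/-- A lower transition rate operator. -/
def IsLTRO {X : Type*} [Fintype X] (Q : (X → ℝ) → (X → ℝ)) : Prop :=
  (∀ μ : ℝ, Q (fun _ => μ) = 0) ∧
  (∀ f g : X → ℝ, Q f + Q g ≤ Q (f + g)) ∧
  (∀ l : ℝ, 0 ≤ l → ∀ f : X → ℝ, Q (l • f) = l • Q f) ∧
  (∀ x y : X, x ≠ y → 0 ≤ Q (ind {y}) x)

/-- A lower transition operator. -/
def IsLTO {X : Type*} [Fintype X] [Nonempty X] (T : (X → ℝ) → (X → ℝ)) : Prop :=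
  (∀ f : X → ℝ, ∀ x : X, minf f ≤ T f x) ∧
  (∀ f g : X → ℝ, T f + T g ≤ T (f + g)) ∧
  (∀ l : ℝ, 0 ≤ l → ∀ f : X → ℝ, T (l • f) = l • T f)

/-- `T` is the family of operators solving `d/dt T_t f = Q (T_t f)` on `[0,∞)`
with `T_0 f = f`. -/
def IsSol {X : Type*} [Fintype X] (Q : (X → ℝ) → (X → ℝ))
    (T : ℝ → (X → ℝ) → (X → ℝ)) : Prop :=
  (∀ f : X → ℝ, T 0 f = f) ∧
  (∀ f : X → ℝ, ∀ t : ℝ, 0 ≤ t →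
    HasDerivWithinAt (fun s => T s f) (Q (T t f)) (Set.Ici 0) t)

/-- Ergodicity of a lower transition rate operator, expressed via its
associated time-dependent family `T`. -/
def ErgodicQ {X : Type*} [Fintype X] (T : ℝ → (X → ℝ) → (X → ℝ)) : Prop :=
  ∀ f : X → ℝ, ∃ c : ℝ, Tendsto (fun t => T t f) atTop (𝓝 (fun _ : X => c))

/-- Ergodicity of a lower transition operator. -/
def ErgodicT {X : Type*} [Fintype X] (T : (X → ℝ) → (X → ℝ)) : Prop :=
  ∀ f : X → ℝ, ∃ c : ℝ, Tendsto (fun n : ℕ => T^[n] f) atTop (𝓝 (fun _ : X => c))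

/-- `x` is upper reachable from `y` (w.r.t. the lower transition rate operator `Q`). -/
def upperReach {X : Type*} [Fintype X] (Q : (X → ℝ) → (X → ℝ)) (y x : X) : Prop :=
  ∃ (n : ℕ) (p : ℕ → X), p 0 = y ∧ p n = x ∧
    ∀ k : ℕ, k < n → p (k + 1) ≠ p k ∧ 0 < conjOp Q (ind {p (k + 1)}) (p k)

/-- One step of the lower-reachability construction: `A ↦ A ∪ {y ∉ A : Q(𝟙_A)(y) > 0}`. -/
def lowerStep {X : Type*} [Fintype X] (Q : (X → ℝ) → (X → ℝ)) (A : Set X) : Set X :=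
  A ∪ {y : X | y ∉ A ∧ 0 < Q (ind A) y}

/-- `A` is lower reachable from `x`: `x ∈ Aₙ` where `n` is the first index with
`Aₙ = Aₙ₊₁` (equivalently, any such index, since the sequence is determined by
recursion and increasing). -/
def lowerReach {X : Type*} [Fintype X] (Q : (X → ℝ) → (X → ℝ)) (x : X) (A : Set X) : Prop :=
  ∃ n : ℕ, (lowerStep Q)^[n] A = (lowerStep Q)^[n + 1] A ∧ x ∈ (lowerStep Q)^[n] A

/-- The set `𝒳_RA := {x : ∃ n ≥ 1, min T̄ⁿ 𝟙ₓ > 0}`. -/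
noncomputable def XRA {X : Type*} [Fintype X] [Nonempty X]
    (T : (X → ℝ) → (X → ℝ)) : Set X :=
  {x : X | ∃ n : ℕ, 0 < minf ((conjOp T)^[n + 1] (ind {x}))}

/-- A regularly absorbing lower transition operator. -/
def RegAbs {X : Type*} [Fintype X] [Nonempty X] (T : (X → ℝ) → (X → ℝ)) : Prop :=
  (XRA T).Nonempty ∧ ∀ x : X, x ∉ XRA T → ∃ n : ℕ, 0 < T^[n + 1] (ind (XRA T)) x

/-- The set `𝒳_1A := {x : min T̄ 𝟙ₓ > 0}`. -/
noncomputable def X1A {X : Type*} [Fintype X] [Nonempty X]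
    (T : (X → ℝ) → (X → ℝ)) : Set X :=
  {x : X | 0 < minf (conjOp T (ind {x}))}

/-- A 1-step absorbing lower transition operator. -/
def OneStepAbs {X : Type*} [Fintype X] [Nonempty X] (T : (X → ℝ) → (X → ℝ)) : Prop :=
  (X1A T).Nonempty ∧ ∀ x : X, x ∉ X1A T → 0 < T (ind (X1A T)) x

/-- The operator (sup) norm of a non-negatively homogeneous operator. -/
noncomputable def opN {X : Type*} [Fintype X] (Q : (X → ℝ) → (X → ℝ)) : ℝ :=
  sSup {r : ℝ | ∃ f : X → ℝ, ‖f‖ = 1 ∧ r = ‖Q f‖}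

/-!
Write `f = min f + ∑_y (f y - min f) 𝟙_y`. Since `Q` ignores constants and is superadditive and
non-negatively homogeneous, and its off-diagonal entries `Q 𝟙_y x` are non-negative,
`Q f x ≥ (f x - min f) · Q 𝟙_x x ≥ -(f x - min f) ‖Q‖`; the first inequality, with
`Q f ≤ -Q (-f)`, also bounds `Q` and so makes the supremum `‖Q‖` a genuine one. Hence
`f x + Δ Q f x ≥ f x - Δ‖Q‖ (f x - min f) ≥ min f` whenever `Δ‖Q‖ ≤ 1`. Superadditivity and
homogeneity of `I + ΔQ` are inherited from `Q` because `Δ ≥ 0`.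
-/

section MinF

variable {X : Type*} [Fintype X] [Nonempty X]

lemma minf_le (f : X → ℝ) (x : X) : minf f ≤ f x :=
  Finset.inf'_le f (Finset.mem_univ x)

lemma abs_minf_le_norm (f : X → ℝ) : |minf f| ≤ ‖f‖ := by
  obtain ⟨x₀, -, hx₀⟩ := Finset.exists_mem_eq_inf' Finset.univ_nonempty f
  rw [minf, hx₀, ← Real.norm_eq_abs]
  exact norm_le_pi_norm f x₀

lemma sub_minf_le_two_mul_norm (f : X → ℝ) (x : X) : f x - minf f ≤ 2 * ‖f‖ := by
  have hfx : |f x| ≤ ‖f‖ := by simpa using norm_le_pi_norm f x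
  linarith [abs_le.mp hfx, abs_le.mp (abs_minf_le_norm f)]

end MinF

lemma sum_smul_ind_singleton {X : Type*} [Fintype X] (f : X → ℝ) :
    ∑ y, f y • ind ({y} : Set X) = f := by
  classical
  funext x
  simp [ind, Pi.single_apply]

namespace IsLTRO

variable {X : Type*} [Fintype X] {Q : (X → ℝ) → (X → ℝ)}

lemma map_zero (hQ : IsLTRO Q) : Q 0 = 0 := hQ.1 0

lemma sum_le_map_sum (hQ : IsLTRO Q) {ι : Type*} (s : Finset ι) (F : ι → X → ℝ) :
    ∑ i ∈ s, Q (F i) ≤ Q (∑ i ∈ s, F i) := by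
  have := Finset.le_sum_of_subadditive (fun f => -Q f) (by simp [hQ.map_zero])
    (fun f g => by rw [← neg_add]; exact neg_le_neg (hQ.2.1 f g)) s F
  simpa [Finset.sum_neg_distrib] using this

lemma map_add_const (hQ : IsLTRO Q) (f : X → ℝ) (c : ℝ) : Q (f + fun _ => c) = Q f := by
  refine le_antisymm ?_ ?_
  · have hcancel : (f + fun _ => c) + (fun _ => -c) = f := by funext; simp
    have := hQ.2.1 (f + fun _ => c) (fun _ => -c)
    rwa [hcancel, hQ.1 (-c), add_zero] at this
  · simpa [hQ.1 c] using hQ.2.1 f (fun _ => c)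

/-- Only the diagonal term of `Q g = Q (∑ g y 𝟙_y) ≥ ∑ g y Q 𝟙_y` can be negative. -/
lemma mul_apply_ind_le_of_nonneg (hQ : IsLTRO Q) {g : X → ℝ} (hg : 0 ≤ g) (x : X) :
    g x * Q (ind {x}) x ≤ Q g x := by
  classical
  have hsum : ∑ y, g y * Q (ind {y}) x ≤ Q g x := by
    have := hQ.sum_le_map_sum Finset.univ (fun y => g y • ind ({y} : Set X))
    rw [sum_smul_ind_singleton] at this
    simpa [hQ.2.2.1 _ (hg _)] using this x
  refine le_trans ?_ hsum
  rw [← Finset.add_sum_erase _ _ (Finset.mem_univ x), le_add_iff_nonneg_right]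
  exact Finset.sum_nonneg fun y hy =>
    mul_nonneg (hg y) (hQ.2.2.2 x y (Finset.ne_of_mem_erase hy).symm)

lemma sub_minf_mul_apply_ind_le [Nonempty X] (hQ : IsLTRO Q) (f : X → ℝ) (x : X) :
    (f x - minf f) * Q (ind {x}) x ≤ Q f x := by
  have hshift : (fun y => f y - minf f) + (fun _ => minf f) = f := by funext y; simp
  have := hQ.mul_apply_ind_le_of_nonneg (g := fun y => f y - minf f)
    (fun y => sub_nonneg.mpr (minf_le f y)) x
  rwa [← hQ.map_add_const (fun y => f y - minf f) (minf f), hshift] at this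

lemma map_le_neg_map_neg (hQ : IsLTRO Q) (f : X → ℝ) : Q f ≤ -Q (-f) := by
  have := hQ.2.1 f (-f)
  rw [add_neg_cancel, hQ.map_zero] at this
  exact le_neg_iff_add_nonpos_right.mpr this

lemma abs_apply_le [Nonempty X] (hQ : IsLTRO Q) (f : X → ℝ) (x : X) :
    |Q f x| ≤ 2 * (∑ y, |Q (ind {y}) y|) * ‖f‖ := by
  set C := ∑ y, |Q (ind ({y} : Set X)) y|
  have hC : ∀ y : X, |Q (ind {y}) y| ≤ C := fun y =>
    Finset.single_le_sum (f := fun y => |Q (ind ({y} : Set X)) y|)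
      (fun _ _ => abs_nonneg _) (Finset.mem_univ y)
  have hlower : ∀ g : X → ℝ, -(2 * C * ‖g‖) ≤ Q g x := fun g => by
    have hg := sub_minf_le_two_mul_norm g x
    have hg₀ := sub_nonneg.mpr (minf_le g x)
    have hQx := abs_le.mp (hC x)
    nlinarith [hQ.sub_minf_mul_apply_ind_le g x]
  have hupper : Q f x ≤ 2 * C * ‖f‖ := by
    have := hlower (-f)
    rw [norm_neg] at this
    have hneg : Q f x ≤ -Q (-f) x := hQ.map_le_neg_map_neg f x
    linarith
  exact abs_le.mpr ⟨hlower f, hupper⟩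

lemma norm_map_le_opN [Nonempty X] (hQ : IsLTRO Q) {f : X → ℝ} (hf : ‖f‖ = 1) :
    ‖Q f‖ ≤ opN Q := by
  refine le_csSup ⟨2 * ∑ y, |Q (ind {y}) y|, ?_⟩ ⟨f, hf, rfl⟩
  rintro r ⟨g, hg, rfl⟩
  refine (pi_norm_le_iff_of_nonneg (by positivity)).mpr fun x => ?_
  simpa [hg] using hQ.abs_apply_le g x

lemma neg_opN_le_apply_ind [Nonempty X] (hQ : IsLTRO Q) (x : X) :
    -opN Q ≤ Q (ind {x}) x := by
  have hind : ‖ind ({x} : Set X)‖ = 1 := by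
    classical
    refine le_antisymm ((pi_norm_le_iff_of_nonneg zero_le_one).mpr fun y => ?_) ?_
    · by_cases hy : y = x <;> simp [ind, hy]
    · simpa [ind] using norm_le_pi_norm (ind ({x} : Set X)) x
  have hx : |Q (ind {x}) x| ≤ ‖Q (ind {x})‖ := by
    simpa using norm_le_pi_norm (Q (ind ({x} : Set X))) x
  linarith [(abs_le.mp hx).1, hQ.norm_map_le_opN hind]

lemma neg_opN_mul_sub_minf_le [Nonempty X] (hQ : IsLTRO Q) (f : X → ℝ) (x : X) :
    -(opN Q * (f x - minf f)) ≤ Q f x := by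
  nlinarith [hQ.sub_minf_mul_apply_ind_le f x, hQ.neg_opN_le_apply_ind x,
    sub_nonneg.mpr (minf_le f x)]

end IsLTRO

/-- If `Δ ≥ 0` and `Δ‖Q‖ ≤ 1`, then `I + ΔQ` is a lower transition operator. -/
theorem stmt10 {X : Type*} [Fintype X] [Nonempty X]
    (Q : (X → ℝ) → (X → ℝ)) (hQ : IsLTRO Q)
    (Δ : ℝ) (hΔ : 0 ≤ Δ) (h : Δ * opN Q ≤ 1) :
    IsLTO (fun f : X → ℝ => f + Δ • Q f) := by
  refine ⟨fun f x => ?_, fun f g x => ?_, fun l hl f => ?_⟩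
  · have hf := sub_nonneg.mpr (minf_le f x)
    calc minf f ≤ f x - Δ * opN Q * (f x - minf f) := by nlinarith
      _ ≤ f x + Δ * Q f x := by nlinarith [hQ.neg_opN_mul_sub_minf_le f x]
  · have hfg : Q f x + Q g x ≤ Q (f + g) x := hQ.2.1 f g x
    simp only [Pi.add_apply, Pi.smul_apply, smul_eq_mul]
    nlinarith [mul_le_mul_of_nonneg_left hfg hΔ]
  · change l • f + Δ • Q (l • f) = l • (f + Δ • Q f)
    rw [hQ.2.2.1 l hl f, smul_comm, smul_add]
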